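/- Let H be a real Hilbert space, A : H → Set H a monotone set-valued operator, and B : H → H a monotone L-Lipschitz map with L > 0. Let δ ∈ ℝ and ε > 0, and fix constants 0 < c₁ < c₂ < (1 − ε)/(2|δ| + 2), an initial value λ₀ > 0, and a summable sequence (γ_k)_{k≥0} of nonnegative reals. Let (x_k)_{k≥0} be a sequence in H, define λ_k for k ≥ 1 by the adaptive rule, and suppose the GFRB inclusion x_k − x_{k+1} − λ_k B x_k − λ_{k−1}(1 + δ)(B x_k − B x_{k−1}) + δ λ_{k−2}(B x_{k−1} − B x_{k−2}) ∈ λ_k A(x_{k+1}) holds for all k ≥ 2. Suppose x ∈ H satisfies −B x ∈ A x. Then there exists a natural number k₃ such that for all k ≥ k₃: ‖x_{k+1} − x‖² + 2λ_k⟨B x_{k+1} − B x_k, x − x_{k+1}⟩ + (ε + |δ|c₂ + c₂)‖x_{k+1} − x_k‖² + |δ|c₂‖x_k − x_{k−1}‖² + 2δλ_{k−1}⟨B x_k − B x_{k−1}, x_{k+1} − x⟩ ≤ ‖x_k − x‖² + 2λ_{k−1}⟨B x_k − B x_{k−1}, x − x_k⟩ + (ε + |δ|c₂ + c₂)‖x_k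 − x_{k−1}‖² + |δ|c₂‖x_{k−1} − x_{k−2}‖² + 2δλ_{k−2}⟨B x_{k−1} − B x_{k−2}, x_k − x⟩ − ε‖x_k − x_{k−1}‖². -/

import Mathlib

open Filter RealInnerProductSpace Pointwise Topology

/-!
The adaptive step sizes stay above `min λ₀ (c₁ / L)` and satisfy `λ_{k+1} ≤ (1 + γ_k) λ_k`, so
`log λ_k` is bounded below and grows by a summable amount: `λ_k` converges to a positive limit and
`λ_k / λ_{k+1} → 1`. Combined with `λ_{k+1} ‖B x_k - B x_{k+1}‖ ≤ (1 + γ_k) c₂ ‖x_k - x_{k+1}‖`,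
this gives, for every `ρ > 1`, eventually `λ_k ‖B x_k - B x_{k+1}‖ ≤ ρ c₂ ‖x_k - x_{k+1}‖`.

The descent inequality then comes from monotonicity of `A` at `x_{k+1}` and `x`, monotonicity of
`B`, the polarization identity, and Young's inequality on the two cross terms
`⟪B x_k - B x_{k-1}, x_{k+1} - x_k⟫` and `⟪B x_{k-1} - B x_{k-2}, x_{k+1} - x_k⟫`; their cost
`(1 + |δ|) c₂ ρ² ‖x_{k+1} - x_k‖²` is absorbed because `c₂ < (1 - ε) / (2|δ| + 2)` leaves room for
some `ρ > 1` with `ε + (1 + |δ|) c₂ (1 + ρ²) ≤ 1`.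
-/

/-- With `l = λ_k`, `a = ‖x_k - x_{k+1}‖` and `b = ‖B x_k - B x_{k+1}‖` this is `λ_{k+1}`. -/
noncomputable def adaptiveStep (c₁ c₂ γ l a b : ℝ) : ℝ :=
  if c₂ / l * a < b then c₁ * a / b else (1 + γ) * l

section AdaptiveStep

variable {c₁ c₂ γ l a b : ℝ}

lemma adaptiveStep_le_one_add_mul (hc₁ : 0 ≤ c₁) (hc₁₂ : c₁ ≤ c₂) (hγ : 0 ≤ γ) (hl : 0 < l)
    (ha : 0 ≤ a) : adaptiveStep c₁ c₂ γ l a b ≤ (1 + γ) * l := by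
  unfold adaptiveStep
  split_ifs with h
  · rcases le_or_gt b 0 with hb | hb
    · exact (div_nonpos_of_nonneg_of_nonpos (by positivity) hb).trans (by positivity)
    · rw [div_mul_eq_mul_div, div_lt_iff₀ hl] at h
      rw [div_le_iff₀ hb]
      nlinarith [mul_le_mul_of_nonneg_right hc₁₂ ha, mul_nonneg hγ (mul_nonneg hl.le hb.le)]
  · exact le_rfl

lemma adaptiveStep_mul_le (hc₁₂ : c₁ ≤ c₂) (hc₂ : 0 ≤ c₂) (hγ : 0 ≤ γ) (hl : 0 < l)
    (ha : 0 ≤ a) : adaptiveStep c₁ c₂ γ l a b * b ≤ (1 + γ) * c₂ * a := by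
  unfold adaptiveStep
  split_ifs with h
  · rcases eq_or_ne b 0 with rfl | hb
    · simp only [div_zero, zero_mul]
      positivity
    · rw [div_mul_cancel₀ _ hb]
      nlinarith [mul_nonneg hγ (mul_nonneg hc₂ ha)]
  · rw [not_lt, div_mul_eq_mul_div, le_div_iff₀ hl] at h
    nlinarith

lemma min_le_adaptiveStep {L : ℝ} (hc₁ : 0 < c₁) (hc₂ : 0 ≤ c₂) (hL : 0 < L) (hγ : 0 ≤ γ)
    (hl : 0 < l) (ha : 0 ≤ a) (hab : b ≤ L * a) :
    min l (c₁ / L) ≤ adaptiveStep c₁ c₂ γ l a b := by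
  unfold adaptiveStep
  split_ifs with h
  · have hb : 0 < b := lt_of_le_of_lt (by positivity) h
    refine (min_le_right _ _).trans ?_
    rw [div_le_div_iff₀ hL hb]
    nlinarith
  · exact (min_le_left _ _).trans (le_mul_of_one_le_left hl.le (by linarith))

end AdaptiveStep

theorem exists_tendsto_of_le_add_of_summable {u γ : ℕ → ℝ} (hu : BddBelow (Set.range u))
    (hle : ∀ k, u (k + 1) ≤ u k + γ k) (hγ : Summable γ) : ∃ l, Tendsto u atTop (𝓝 l) := by
  set S : ℕ → ℝ := fun k => ∑ j ∈ Finset.range k, γ j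
  have hS : Tendsto S atTop (𝓝 (∑' j, γ j)) := hγ.hasSum.tendsto_sum_nat
  have hanti : Antitone (u - S) := antitone_nat_of_succ_le fun k => by
    simp only [Pi.sub_apply, S, Finset.sum_range_succ]
    linarith [hle k]
  have hbdd : BddBelow (Set.range (u - S)) := by
    obtain ⟨m, hm⟩ := hu
    obtain ⟨M, hM⟩ := hS.bddAbove_range
    refine ⟨m - M, ?_⟩
    rintro _ ⟨k, rfl⟩
    exact sub_le_sub (hm ⟨k, rfl⟩) (hM ⟨k, rfl⟩)
  exact ⟨_, by simpa using (tendsto_atTop_ciInf hanti hbdd).add hS⟩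

section AdaptiveStepSeq

variable {c₁ c₂ L : ℝ} {γ lam a b : ℕ → ℝ}

theorem min_le_of_eq_adaptiveStep (hc₁ : 0 < c₁) (hc₂ : 0 ≤ c₂) (hL : 0 < L)
    (hγ : ∀ k, 0 ≤ γ k) (ha : ∀ k, 0 ≤ a k) (hab : ∀ k, b k ≤ L * a k) (hlam0 : 0 < lam 0)
    (hrule : ∀ k, lam (k + 1) = adaptiveStep c₁ c₂ (γ k) (lam k) (a k) (b k)) (k : ℕ) :
    min (lam 0) (c₁ / L) ≤ lam k := by
  induction k with
  | zero => exact min_le_left _ _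
  | succ k ih =>
    have hk : 0 < lam k := (lt_min hlam0 (div_pos hc₁ hL)).trans_le ih
    rw [hrule k]
    exact (le_min ih (min_le_right _ _)).trans
      (min_le_adaptiveStep hc₁ hc₂ hL (hγ k) hk (ha k) (hab k))

theorem pos_of_eq_adaptiveStep (hc₁ : 0 < c₁) (hc₂ : 0 ≤ c₂) (hL : 0 < L)
    (hγ : ∀ k, 0 ≤ γ k) (ha : ∀ k, 0 ≤ a k) (hab : ∀ k, b k ≤ L * a k) (hlam0 : 0 < lam 0)
    (hrule : ∀ k, lam (k + 1) = adaptiveStep c₁ c₂ (γ k) (lam k) (a k) (b k)) (k : ℕ) :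
    0 < lam k :=
  (lt_min hlam0 (div_pos hc₁ hL)).trans_le
    (min_le_of_eq_adaptiveStep hc₁ hc₂ hL hγ ha hab hlam0 hrule k)

theorem exists_pos_tendsto_of_eq_adaptiveStep (hc₁ : 0 < c₁) (hc₁₂ : c₁ ≤ c₂) (hL : 0 < L)
    (hγ : ∀ k, 0 ≤ γ k) (hγsum : Summable γ) (ha : ∀ k, 0 ≤ a k) (hab : ∀ k, b k ≤ L * a k)
    (hlam0 : 0 < lam 0)
    (hrule : ∀ k, lam (k + 1) = adaptiveStep c₁ c₂ (γ k) (lam k) (a k) (b k)) :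
    ∃ Λ, 0 < Λ ∧ Tendsto lam atTop (𝓝 Λ) := by
  have hc₂ : 0 ≤ c₂ := hc₁.le.trans hc₁₂
  have hpos := pos_of_eq_adaptiveStep hc₁ hc₂ hL hγ ha hab hlam0 hrule
  have hbdd : BddBelow (Set.range fun k => Real.log (lam k)) := by
    refine ⟨Real.log (min (lam 0) (c₁ / L)), ?_⟩
    rintro _ ⟨k, rfl⟩
    exact Real.log_le_log (lt_min hlam0 (div_pos hc₁ hL))
      (min_le_of_eq_adaptiveStep hc₁ hc₂ hL hγ ha hab hlam0 hrule k)
  have hle : ∀ k, Real.log (lam (k + 1)) ≤ Real.log (lam k) + γ k := fun k => by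
    have h1 : 0 < 1 + γ k := by linarith [hγ k]
    calc Real.log (lam (k + 1)) ≤ Real.log ((1 + γ k) * lam k) :=
          Real.log_le_log (hpos _) (hrule k ▸
            adaptiveStep_le_one_add_mul hc₁.le hc₁₂ (hγ k) (hpos k) (ha k))
      _ = Real.log (1 + γ k) + Real.log (lam k) := Real.log_mul h1.ne' (hpos k).ne'
      _ ≤ Real.log (lam k) + γ k := by linarith [Real.log_le_sub_one_of_pos h1]
  obtain ⟨l, hl⟩ := exists_tendsto_of_le_add_of_summable hbdd hle hγsum
  exact ⟨Real.exp l, Real.exp_pos l,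
    ((Real.continuous_exp.tendsto l).comp hl).congr fun k => Real.exp_log (hpos k)⟩

theorem eventually_mul_le_of_eq_adaptiveStep (hc₁ : 0 < c₁) (hc₁₂ : c₁ ≤ c₂) (hL : 0 < L)
    (hγ : ∀ k, 0 ≤ γ k) (hγsum : Summable γ) (ha : ∀ k, 0 ≤ a k) (hab : ∀ k, b k ≤ L * a k)
    (hlam0 : 0 < lam 0)
    (hrule : ∀ k, lam (k + 1) = adaptiveStep c₁ c₂ (γ k) (lam k) (a k) (b k))
    {ρ : ℝ} (hρ : 1 < ρ) : ∀ᶠ k in atTop, lam k * b k ≤ ρ * c₂ * a k := by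
  have hc₂ : 0 ≤ c₂ := hc₁.le.trans hc₁₂
  have hpos := pos_of_eq_adaptiveStep hc₁ hc₂ hL hγ ha hab hlam0 hrule
  obtain ⟨Λ, hΛ, hlim⟩ :=
    exists_pos_tendsto_of_eq_adaptiveStep hc₁ hc₁₂ hL hγ hγsum ha hab hlam0 hrule
  have hratio : Tendsto (fun k => lam k / lam (k + 1) * (1 + γ k)) atTop (𝓝 1) := by
    simpa [hΛ.ne'] using (hlim.div (hlim.comp (tendsto_add_atTop_nat 1)) hΛ.ne').mul
      (tendsto_const_nhds.add hγsum.tendsto_atTop_zero)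
  filter_upwards [hratio.eventually_lt_const hρ] with k hk
  calc lam k * b k = lam k / lam (k + 1) * (lam (k + 1) * b k) := by
        field_simp [(hpos (k + 1)).ne']
    _ ≤ lam k / lam (k + 1) * ((1 + γ k) * c₂ * a k) := by
        refine mul_le_mul_of_nonneg_left ?_ (div_nonneg (hpos k).le (hpos (k + 1)).le)
        rw [hrule k]
        exact adaptiveStep_mul_le hc₁₂ hc₂ (hγ k) (hpos k) (ha k)
    _ = lam k / lam (k + 1) * (1 + γ k) * (c₂ * a k) := by ring
    _ ≤ ρ * (c₂ * a k) := by gcongr; exact mul_nonneg hc₂ (ha k)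
    _ = ρ * c₂ * a k := by ring

end AdaptiveStepSeq

lemma exists_one_lt_mul_one_add_sq_le {q r : ℝ} (hq : 0 < q) (h : 2 * q < r) :
    ∃ ρ, 1 < ρ ∧ q * (1 + ρ ^ 2) ≤ r := by
  have hr : 1 < r / q - 1 := by rw [lt_sub_iff_add_lt, lt_div_iff₀ hq]; linarith
  refine ⟨√(r / q - 1), Real.lt_sqrt_of_sq_lt (by linarith), le_of_eq ?_⟩
  rw [Real.sq_sqrt (by linarith)]
  field_simp
  ring

section Descent

variable {H : Type*} [NormedAddCommGroup H] [InnerProductSpace ℝ H]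

lemma two_mul_inner_le_of_abs_mul_norm_le {l ρ c : ℝ} {u w d : H} (hc : 0 ≤ c)
    (h : |l| * ‖u‖ ≤ ρ * c * ‖d‖) : 2 * l * ⟪u, w⟫ ≤ c * (ρ ^ 2 * ‖w‖ ^ 2 + ‖d‖ ^ 2) := by
  have hcs : l * ⟪u, w⟫ ≤ |l| * ‖u‖ * ‖w‖ := by
    calc l * ⟪u, w⟫ ≤ |l| * |⟪u, w⟫| := (le_abs_self _).trans_eq (abs_mul _ _)
      _ ≤ |l| * (‖u‖ * ‖w‖) := by gcongr; exact abs_real_inner_le_norm u w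
      _ = |l| * ‖u‖ * ‖w‖ := (mul_assoc _ _ _).symm
  calc 2 * l * ⟪u, w⟫ ≤ 2 * (|l| * ‖u‖) * ‖w‖ := by linarith
    _ ≤ 2 * (ρ * c * ‖d‖) * ‖w‖ := by gcongr
    _ ≤ c * (ρ ^ 2 * ‖w‖ ^ 2 + ‖d‖ ^ 2) := by
        nlinarith [mul_nonneg hc (sq_nonneg (ρ * ‖w‖ - ‖d‖))]

lemma inner_nonneg_of_mem_smul {A : H → Set H}
    (hA : ∀ x y u v : H, u ∈ A x → v ∈ A y → 0 ≤ ⟪u - v, x - y⟫) {l : ℝ} (hl : 0 ≤ l)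
    {x y z v : H} (hz : z ∈ l • A x) (hv : v ∈ A y) : 0 ≤ ⟪z - l • v, x - y⟫ := by
  obtain ⟨u, hu, rfl⟩ := hz
  rw [← smul_sub, real_inner_smul_left]
  exact mul_nonneg hl (hA _ _ _ _ hu hv)

variable {A : H → Set H} {B : H → H} {δ l₀ l₁ l₂ : ℝ} {x₀ x₁ x₂ x₃ x' : H}

theorem gfrb_inner_inequality
    (hA : ∀ x y u v : H, u ∈ A x → v ∈ A y → 0 ≤ ⟪u - v, x - y⟫)
    (hB : ∀ x y : H, 0 ≤ ⟪B x - B y, x - y⟫) (hl₂ : 0 ≤ l₂)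
    (hstep : x₂ - x₃ - l₂ • B x₂ - (l₁ * (1 + δ)) • (B x₂ - B x₁)
      + (δ * l₀) • (B x₁ - B x₀) ∈ l₂ • A x₃)
    (hx' : -B x' ∈ A x') :
    ‖x₃ - x'‖ ^ 2 + ‖x₃ - x₂‖ ^ 2 + 2 * l₂ * ⟪B x₃ - B x₂, x' - x₃⟫
        + 2 * (l₁ * (1 + δ)) * ⟪B x₂ - B x₁, x₃ - x'⟫ ≤
      ‖x₂ - x'‖ ^ 2 + 2 * (δ * l₀) * ⟪B x₁ - B x₀, x₃ - x'⟫ := by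
  have hmono := inner_nonneg_of_mem_smul hA hl₂ hstep hx'
  have hsplit : x₂ - x₃ - l₂ • B x₂ - (l₁ * (1 + δ)) • (B x₂ - B x₁)
      + (δ * l₀) • (B x₁ - B x₀) - l₂ • -B x' = (x₂ - x₃) - l₂ • (B x₃ - B x')
      - l₂ • (B x₂ - B x₃) - (l₁ * (1 + δ)) • (B x₂ - B x₁) + (δ * l₀) • (B x₁ - B x₀) := by
    module
  have hexpand : ⟪(x₂ - x₃) - l₂ • (B x₃ - B x') - l₂ • (B x₂ - B x₃)
      - (l₁ * (1 + δ)) • (B x₂ - B x₁) + (δ * l₀) • (B x₁ - B x₀), x₃ - x'⟫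
      = ⟪x₂ - x₃, x₃ - x'⟫ - l₂ * ⟪B x₃ - B x', x₃ - x'⟫ - l₂ * ⟪B x₂ - B x₃, x₃ - x'⟫
        - l₁ * (1 + δ) * ⟪B x₂ - B x₁, x₃ - x'⟫ + δ * l₀ * ⟪B x₁ - B x₀, x₃ - x'⟫ := by
    simp only [inner_add_left, inner_sub_left, real_inner_smul_left]
  have hflip : ⟪B x₂ - B x₃, x₃ - x'⟫ = ⟪B x₃ - B x₂, x' - x₃⟫ := by
    rw [← neg_sub (B x₃), ← neg_sub x', inner_neg_neg]
  rw [hsplit, hexpand, hflip] at hmono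
  have hBx := mul_nonneg hl₂ (hB x₃ x')
  have hpolar := norm_add_sq_real (x₂ - x₃) (x₃ - x')
  rw [sub_add_sub_cancel, ← norm_neg (x₂ - x₃), neg_sub] at hpolar
  linarith

theorem gfrb_descent_step {ε c₂ ρ : ℝ}
    (hA : ∀ x y u v : H, u ∈ A x → v ∈ A y → 0 ≤ ⟪u - v, x - y⟫)
    (hB : ∀ x y : H, 0 ≤ ⟪B x - B y, x - y⟫) (hc₂ : 0 ≤ c₂)
    (hl₀ : 0 ≤ l₀) (hl₁ : 0 ≤ l₁) (hl₂ : 0 ≤ l₂) (hρ : ε + (1 + |δ|) * c₂ * (1 + ρ ^ 2) ≤ 1)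
    (hstep : x₂ - x₃ - l₂ • B x₂ - (l₁ * (1 + δ)) • (B x₂ - B x₁)
      + (δ * l₀) • (B x₁ - B x₀) ∈ l₂ • A x₃)
    (hx' : -B x' ∈ A x')
    (h₀ : l₀ * ‖B x₀ - B x₁‖ ≤ ρ * c₂ * ‖x₀ - x₁‖)
    (h₁ : l₁ * ‖B x₁ - B x₂‖ ≤ ρ * c₂ * ‖x₁ - x₂‖) :
    ‖x₃ - x'‖ ^ 2 + 2 * l₂ * ⟪B x₃ - B x₂, x' - x₃⟫ + (ε + |δ| * c₂ + c₂) * ‖x₃ - x₂‖ ^ 2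
        + |δ| * c₂ * ‖x₂ - x₁‖ ^ 2 + 2 * δ * l₁ * ⟪B x₂ - B x₁, x₃ - x'⟫ ≤
      ‖x₂ - x'‖ ^ 2 + 2 * l₁ * ⟪B x₂ - B x₁, x' - x₂⟫ + (ε + |δ| * c₂ + c₂) * ‖x₂ - x₁‖ ^ 2
        + |δ| * c₂ * ‖x₁ - x₀‖ ^ 2 + 2 * δ * l₀ * ⟪B x₁ - B x₀, x₂ - x'⟫
        - ε * ‖x₂ - x₁‖ ^ 2 := by
  have hbase := gfrb_inner_inequality hA hB hl₂ hstep hx'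
  have hyoung₁ := two_mul_inner_le_of_abs_mul_norm_le (w := x₃ - x₂) hc₂
    (by rwa [abs_of_nonneg hl₁] : |l₁| * ‖B x₁ - B x₂‖ ≤ ρ * c₂ * ‖x₁ - x₂‖)
  have hyoung₀ := two_mul_inner_le_of_abs_mul_norm_le (w := x₃ - x₂)
    (mul_nonneg (abs_nonneg δ) hc₂)
    (by
      rw [abs_mul, abs_of_nonneg hl₀, norm_sub_rev (B x₁), norm_sub_rev x₁]
      nlinarith [mul_le_mul_of_nonneg_left h₀ (abs_nonneg δ)] :
      |δ * l₀| * ‖B x₁ - B x₀‖ ≤ ρ * (|δ| * c₂) * ‖x₁ - x₀‖)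
  have hpack₁ : ⟪B x₂ - B x₁, x₃ - x'⟫ + ⟪B x₂ - B x₁, x' - x₂⟫ = -⟪B x₁ - B x₂, x₃ - x₂⟫ := by
    rw [← inner_add_right, sub_add_sub_cancel, ← inner_neg_left, neg_sub]
  have hpack₀ : ⟪B x₁ - B x₀, x₃ - x'⟫ - ⟪B x₁ - B x₀, x₂ - x'⟫ = ⟪B x₁ - B x₀, x₃ - x₂⟫ := by
    rw [← inner_sub_right, sub_sub_sub_cancel_right]
  rw [norm_sub_rev x₁ x₂] at hyoung₁
  linarith [mul_le_mul_of_nonneg_right hρ (sq_nonneg ‖x₃ - x₂‖),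
    congrArg (l₁ * ·) hpack₁, congrArg (δ * l₀ * ·) hpack₀]

end Descent

theorem gfrb_descent_inequality_general
    {H : Type*} [NormedAddCommGroup H] [InnerProductSpace ℝ H]
    (A : H → Set H)
    (hAmono : ∀ x y u v : H, u ∈ A x → v ∈ A y → 0 ≤ ⟪u - v, x - y⟫)
    (B : H → H) (L : ℝ) (hL : 0 < L)
    (hBmono : ∀ x y : H, 0 ≤ ⟪B x - B y, x - y⟫)
    (hLip : ∀ x y : H, ‖B x - B y‖ ≤ L * ‖x - y‖)
    (δ ε : ℝ)
    (c₁ c₂ : ℝ) (hc₁ : 0 < c₁) (hc₁₂ : c₁ < c₂)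
    (hc₂ : c₂ < (1 - ε) / (2 * |δ| + 2))
    (γ : ℕ → ℝ) (hγ : ∀ k, 0 ≤ γ k) (hγsum : Summable γ)
    (x : ℕ → H)
    (lam : ℕ → ℝ) (hlam0 : 0 < lam 0)
    (hrule : ∀ k : ℕ,
      lam (k + 1) =
        if (c₂ / lam k) * ‖x k - x (k + 1)‖ < ‖B (x k) - B (x (k + 1))‖ then
          c₁ * ‖x k - x (k + 1)‖ / ‖B (x k) - B (x (k + 1))‖
        else (1 + γ k) * lam k)
    (hGFRB : ∀ k : ℕ, 2 ≤ k →
      x k - x (k + 1) - lam k • B (x k)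
          - (lam (k - 1) * (1 + δ)) • (B (x k) - B (x (k - 1)))
          + (δ * lam (k - 2)) • (B (x (k - 1)) - B (x (k - 2)))
        ∈ lam k • A (x (k + 1)))
    (x' : H) (hx' : -B x' ∈ A x') :
    ∃ k₃ : ℕ, ∀ k : ℕ, k₃ ≤ k →
      ‖x (k + 1) - x'‖ ^ 2
          + 2 * lam k * ⟪B (x (k + 1)) - B (x k), x' - x (k + 1)⟫
          + (ε + |δ| * c₂ + c₂) * ‖x (k + 1) - x k‖ ^ 2
          + |δ| * c₂ * ‖x k - x (k - 1)‖ ^ 2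
          + 2 * δ * lam (k - 1) * ⟪B (x k) - B (x (k - 1)), x (k + 1) - x'⟫ ≤
        ‖x k - x'‖ ^ 2
          + 2 * lam (k - 1) * ⟪B (x k) - B (x (k - 1)), x' - x k⟫
          + (ε + |δ| * c₂ + c₂) * ‖x k - x (k - 1)‖ ^ 2
          + |δ| * c₂ * ‖x (k - 1) - x (k - 2)‖ ^ 2
          + 2 * δ * lam (k - 2) * ⟪B (x (k - 1)) - B (x (k - 2)), x k - x'⟫
          - ε * ‖x k - x (k - 1)‖ ^ 2 := by
  have hc₂pos : 0 < c₂ := hc₁.trans hc₁₂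
  have hpos := pos_of_eq_adaptiveStep hc₁ hc₂pos.le hL hγ (fun k => norm_nonneg _)
    (fun k => hLip _ _) hlam0 hrule
  obtain ⟨ρ, hρ, hρc⟩ : ∃ ρ, 1 < ρ ∧ (1 + |δ|) * c₂ * (1 + ρ ^ 2) ≤ 1 - ε := by
    refine exists_one_lt_mul_one_add_sq_le (by positivity) ?_
    rw [lt_div_iff₀ (by positivity)] at hc₂
    linarith
  obtain ⟨K, hK⟩ := eventually_atTop.mp <| eventually_mul_le_of_eq_adaptiveStep hc₁ hc₁₂.le hL
    hγ hγsum (fun k => norm_nonneg _) (fun k => hLip _ _) hlam0 hrule hρ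
  refine ⟨K + 2, fun k hk => ?_⟩
  obtain ⟨j, rfl⟩ : ∃ j, k = j + 2 := ⟨k - 2, by omega⟩
  exact gfrb_descent_step hAmono hBmono hc₂pos.le (hpos j).le (hpos (j + 1)).le (hpos (j + 2)).le
    (by linarith) (hGFRB (j + 2) (by omega)) hx' (hK j (by omega)) (hK (j + 1) (by omega))

/-- Lemma (descent inequality) for GFRB with the adaptive increasing step-size. -/
theorem gfrb_descent_inequality
    {H : Type*} [NormedAddCommGroup H] [InnerProductSpace ℝ H]
    (A : H → Set H)
    (hAmono : ∀ x y u v : H, u ∈ A x → v ∈ A y → 0 ≤ ⟪u - v, x - y⟫)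
    (B : H → H) (L : ℝ) (hL : 0 < L)
    (hBmono : ∀ x y : H, 0 ≤ ⟪B x - B y, x - y⟫)
    (hLip : ∀ x y : H, ‖B x - B y‖ ≤ L * ‖x - y‖)
    (δ ε : ℝ) (hε : 0 < ε)
    (c₁ c₂ : ℝ) (hc₁ : 0 < c₁) (hc₁₂ : c₁ < c₂)
    (hc₂ : c₂ < (1 - ε) / (2 * |δ| + 2))
    (γ : ℕ → ℝ) (hγ : ∀ k, 0 ≤ γ k) (hγsum : Summable γ)
    (x : ℕ → H)
    (lam : ℕ → ℝ) (hlam0 : 0 < lam 0)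
    (hrule : ∀ k : ℕ,
      lam (k + 1) =
        if (c₂ / lam k) * ‖x k - x (k + 1)‖ < ‖B (x k) - B (x (k + 1))‖ then
          c₁ * ‖x k - x (k + 1)‖ / ‖B (x k) - B (x (k + 1))‖
        else (1 + γ k) * lam k)
    (hGFRB : ∀ k : ℕ, 2 ≤ k →
      x k - x (k + 1) - lam k • B (x k)
          - (lam (k - 1) * (1 + δ)) • (B (x k) - B (x (k - 1)))
          + (δ * lam (k - 2)) • (B (x (k - 1)) - B (x (k - 2)))
        ∈ lam k • A (x (k + 1)))
    (x' : H) (hx' : -B x' ∈ A x') :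
    ∃ k₃ : ℕ, ∀ k : ℕ, k₃ ≤ k →
      ‖x (k + 1) - x'‖ ^ 2
          + 2 * lam k * ⟪B (x (k + 1)) - B (x k), x' - x (k + 1)⟫
          + (ε + |δ| * c₂ + c₂) * ‖x (k + 1) - x k‖ ^ 2
          + |δ| * c₂ * ‖x k - x (k - 1)‖ ^ 2
          + 2 * δ * lam (k - 1) * ⟪B (x k) - B (x (k - 1)), x (k + 1) - x'⟫ ≤
        ‖x k - x'‖ ^ 2
          + 2 * lam (k - 1) * ⟪B (x k) - B (x (k - 1)), x' - x k⟫
          + (ε + |δ| * c₂ + c₂) * ‖x k - x (k - 1)‖ ^ 2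
          + |δ| * c₂ * ‖x (k - 1) - x (k - 2)‖ ^ 2
          + 2 * δ * lam (k - 2) * ⟪B (x (k - 1)) - B (x (k - 2)), x k - x'⟫
          - ε * ‖x k - x (k - 1)‖ ^ 2 :=
  gfrb_descent_inequality_general A hAmono B L hL hBmono hLip δ ε c₁ c₂ hc₁ hc₁₂ hc₂ γ hγ hγsum x
    lam hlam0 hrule hGFRB x' hx'
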